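/- Let H be a finite connected nontrivial simple graph of order n₂ and let n₁ ≥ 2. Then dim_s(K_{n₁} ⊠ H) = n₂(n₁ − 1) + n₁ · dim_s(H) − (n₁ − 1) · dim_s(H), where K_{n₁} is the complete graph on n₁ vertices. -/

import Mathlib

open SimpleGraph Finset

variable {α β : Type*}

/-- The strong product of two simple graphs: distinct vertices `(a,b)` and `(c,d)` are adjacent
iff (`a = c` or `a ~ c`) and (`b = d` or `b ~ d`). -/
def strongProd (G : SimpleGraph α) (H : SimpleGraph β) : SimpleGraph (α × β) where
  Adj x y := x ≠ y ∧ (x.1 = y.1 ∨ G.Adj x.1 y.1) ∧ (x.2 = y.2 ∨ H.Adj x.2 y.2)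
  symm := by
    constructor
    rintro x y ⟨h1, h2, h3⟩
    exact ⟨h1.symm, h2.imp Eq.symm (fun a => a.symm), h3.imp Eq.symm (fun a => a.symm)⟩
  loopless := ⟨fun x h => h.1 rfl⟩

/-- The Cartesian sum (disjunctive product) of two simple graphs. -/
def cartSum (G : SimpleGraph α) (H : SimpleGraph β) : SimpleGraph (α × β) where
  Adj x y := x ≠ y ∧ (G.Adj x.1 y.1 ∨ H.Adj x.2 y.2)
  symm := by
    constructor
    rintro x y ⟨h1, h2⟩
    exact ⟨h1.symm, h2.imp (fun a => a.symm) (fun a => a.symm)⟩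
  loopless := ⟨fun x h => h.1 rfl⟩

/-- `u` is maximally distant from `v` in `G`. -/
def MaximallyDistantFrom (G : SimpleGraph α) (u v : α) : Prop :=
  ∀ w, G.Adj u w → G.dist v w ≤ G.dist u v

/-- `u` and `v` are mutually maximally distant in `G`. -/
def MutuallyMaximallyDistant (G : SimpleGraph α) (u v : α) : Prop :=
  MaximallyDistantFrom G u v ∧ MaximallyDistantFrom G v u

/-- The strong resolving graph of `G`. -/
def strongResolvingGraph (G : SimpleGraph α) : SimpleGraph α where
  Adj u v := u ≠ v ∧ MutuallyMaximallyDistant G u v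
  symm := ⟨by rintro u v ⟨h1, h2, h3⟩; exact ⟨h1.symm, h3, h2⟩⟩
  loopless := ⟨fun x h => h.1 rfl⟩

/-- A finset of vertices is independent if no two of its (distinct) members are adjacent. -/
def IsIndepFinset (G : SimpleGraph α) (s : Finset α) : Prop :=
  ∀ u ∈ s, ∀ v ∈ s, u ≠ v → ¬ G.Adj u v

/-- The independence number `β(G)`. -/
noncomputable def indepNum (G : SimpleGraph α) [Fintype α] : ℕ :=
  sSup {n | ∃ s : Finset α, IsIndepFinset G s ∧ s.card = n}

/-- `w` strongly resolves `u` and `v` in `G`. -/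
def StronglyResolves (G : SimpleGraph α) (w u v : α) : Prop :=
  G.dist w u = G.dist w v + G.dist v u ∨ G.dist w v = G.dist w u + G.dist u v

/-- A strong metric generator for `G`. -/
def IsStrongMetricGenerator (G : SimpleGraph α) (s : Finset α) : Prop :=
  ∀ u v : α, u ≠ v → ∃ w ∈ s, StronglyResolves G w u v

/-- The strong metric dimension of `G`. -/
noncomputable def sdim (G : SimpleGraph α) [Fintype α] : ℕ :=
  sInf {n | ∃ s : Finset α, IsStrongMetricGenerator G s ∧ s.card = n}

/-!
Distances in a strong product are `d((a, b), (c, d)) = max (d(a, c)) (d(b, d))`. Hence in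
`K_n ⊠ H` two distinct vertices of a fibre `K_n × {y}` are mutually maximally distant, and so are
`(x, b)` and `(x', d)` whenever `b` and `d` are mutually maximally distant in `H`. Since a strong
metric generator of a connected graph is exactly a set meeting every mutually maximally distant
pair, a generator `S` of `K_n ⊠ H` misses at most one vertex of each fibre, and the `y` whose
fibre lies inside `S` form a generator of `H`; counting gives
`|S| ≥ |V(H)| (n - 1) + dim_s(H)`. Conversely, for a generator `T` of `H`, deleting
`{a₀} × (V(H) \ T)` from the vertex set leaves a generator of that size.
-/

section StrongProduct

variable {G : SimpleGraph α} {H : SimpleGraph β}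

def strongProdLeft (H : SimpleGraph β) (b : β) : G →g strongProd G H where
  toFun a := (a, b)
  map_rel' h := ⟨fun e => h.ne (congrArg Prod.fst e), Or.inr h, Or.inl rfl⟩

def strongProdRight (G : SimpleGraph α) (a : α) : H →g strongProd G H where
  toFun b := (a, b)
  map_rel' h := ⟨fun e => h.ne (congrArg Prod.snd e), Or.inl rfl, Or.inr h⟩

lemma SimpleGraph.Adj.strongProd {a a' : α} {b b' : β} (ha : G.Adj a a') (hb : H.Adj b b') :
    (strongProd G H).Adj (a, b) (a', b') :=
  ⟨fun e => ha.ne (congrArg Prod.fst e), Or.inr ha, Or.inr hb⟩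

/-- Walk along both walks simultaneously, then finish the longer one. -/
lemma exists_walk_strongProd_length_eq_max {a c : α} {b d : β} (p : G.Walk a c)
    (q : H.Walk b d) :
    ∃ r : (strongProd G H).Walk (a, b) (c, d), r.length = max p.length q.length := by
  induction p generalizing b with
  | nil => exact ⟨q.map (strongProdRight _ _), (Walk.length_map _ _).trans (by simp)⟩
  | cons hac p ih =>
    cases q with
    | nil =>
      exact ⟨(Walk.cons hac p).map (strongProdLeft _ _), (Walk.length_map _ _).trans (by simp)⟩
    | cons hbd q =>
      obtain ⟨r, hr⟩ := ih q
      refine ⟨Walk.cons (Adj.strongProd hac hbd) r, ?_⟩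
      rw [Walk.length_cons, hr, Walk.length_cons, Walk.length_cons, Nat.add_max_add_right]

lemma SimpleGraph.Walk.exists_walk_length_le_of_adj {f : α → β}
    (hf : ∀ ⦃x y⦄, G.Adj x y → f x = f y ∨ H.Adj (f x) (f y)) {u v : α} (p : G.Walk u v) :
    ∃ q : H.Walk (f u) (f v), q.length ≤ p.length := by
  induction p with
  | nil => exact ⟨Walk.nil, le_rfl⟩
  | cons h p ih =>
    obtain ⟨q, hq⟩ := ih
    rcases hf h with he | hadj
    · exact ⟨q.copy he.symm rfl, by rw [Walk.length_copy, Walk.length_cons]; omega⟩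
    · exact ⟨Walk.cons hadj q, Nat.succ_le_succ hq⟩

lemma SimpleGraph.Reachable.dist_le_of_adj {f : α → β}
    (hf : ∀ ⦃x y⦄, G.Adj x y → f x = f y ∨ H.Adj (f x) (f y)) {u v : α}
    (h : G.Reachable u v) : H.dist (f u) (f v) ≤ G.dist u v := by
  obtain ⟨p, hp⟩ := h.exists_walk_length_eq_dist
  obtain ⟨q, hq⟩ := p.exists_walk_length_le_of_adj hf
  exact (dist_le q).trans (hp ▸ hq)

theorem dist_strongProd (hG : G.Preconnected) (hH : H.Preconnected) (x y : α × β) :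
    (strongProd G H).dist x y = max (G.dist x.1 y.1) (H.dist x.2 y.2) := by
  obtain ⟨p, hp⟩ := (hG x.1 y.1).exists_walk_length_eq_dist
  obtain ⟨q, hq⟩ := (hH x.2 y.2).exists_walk_length_eq_dist
  obtain ⟨r, hr⟩ := exists_walk_strongProd_length_eq_max p q
  refine le_antisymm (hp ▸ hq ▸ hr ▸ dist_le r) (max_le ?_ ?_)
  · exact Reachable.dist_le_of_adj (G := strongProd G H) (fun _ _ h => h.2.1) ⟨r⟩
  · exact Reachable.dist_le_of_adj (G := strongProd G H) (fun _ _ h => h.2.2) ⟨r⟩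

theorem connected_strongProd (hG : G.Connected) (hH : H.Connected) :
    (strongProd G H).Connected := by
  have := hG.nonempty
  have := hH.nonempty
  refine (connected_iff _).2 ⟨fun x y => ?_, inferInstance⟩
  obtain ⟨p⟩ := hG x.1 y.1
  obtain ⟨q⟩ := hH x.2 y.2
  exact ⟨(exists_walk_strongProd_length_eq_max p q).choose⟩

lemma dist_strongProd_top [DecidableEq α] (hH : H.Connected) (x y : α × β) :
    (strongProd ⊤ H).dist x y = max (if x.1 = y.1 then 0 else 1) (H.dist x.2 y.2) := by
  rw [dist_strongProd preconnected_top hH.preconnected, dist_top]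

end StrongProduct

section StrongResolving

variable {G : SimpleGraph α}

lemma stronglyResolves_comm {w u v : α} :
    StronglyResolves G w u v ↔ StronglyResolves G w v u :=
  Or.comm

lemma stronglyResolves_left (u v : α) : StronglyResolves G u u v :=
  Or.inr (by rw [dist_self, zero_add])

lemma stronglyResolves_right (u v : α) : StronglyResolves G v u v :=
  Or.inl (by rw [dist_self, zero_add])

lemma isStrongMetricGenerator_univ [Fintype α] : IsStrongMetricGenerator G univ := by
  intro u v _
  exact ⟨u, mem_univ u, stronglyResolves_left u v⟩

lemma sdim_le_card [Fintype α] {s : Finset α} (hs : IsStrongMetricGenerator G s) :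
    sdim G ≤ s.card :=
  Nat.sInf_le ⟨s, hs, rfl⟩

lemma exists_isStrongMetricGenerator_card_eq_sdim [Fintype α] :
    ∃ s : Finset α, IsStrongMetricGenerator G s ∧ s.card = sdim G :=
  Nat.sInf_mem (s := {n | ∃ s : Finset α, IsStrongMetricGenerator G s ∧ s.card = n})
    ⟨_, univ, isStrongMetricGenerator_univ, rfl⟩

lemma SimpleGraph.Connected.exists_adj_dist_add_one_eq (hG : G.Connected) {u w : α}
    (h : u ≠ w) : ∃ u', G.Adj u u' ∧ G.dist u' w + 1 = G.dist u w := by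
  obtain ⟨p, hp⟩ := hG.exists_walk_length_eq_dist u w
  cases p with
  | nil => exact (h rfl).elim
  | @cons _ u' _ hadj q =>
    have htri : G.dist u w ≤ G.dist u u' + G.dist u' w := hG.dist_triangle
    rw [dist_eq_one_iff_adj.2 hadj] at htri
    have hq := dist_le q
    rw [Walk.length_cons] at hp
    exact ⟨u', hadj, by omega⟩

lemma MaximallyDistantFrom.dist_ne_add (hG : G.Connected) {u v w : α}
    (h : MaximallyDistantFrom G u v) (hw : w ≠ u) :
    G.dist w v ≠ G.dist w u + G.dist u v := by
  obtain ⟨u', hadj, hu'⟩ := hG.exists_adj_dist_add_one_eq hw.symm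
  have hvu' : G.dist v u' ≤ G.dist u v := h u' hadj
  have htri : G.dist w v ≤ G.dist w u' + G.dist u' v := hG.dist_triangle
  have c₁ : G.dist w u' = G.dist u' w := dist_comm
  have c₂ : G.dist u' v = G.dist v u' := dist_comm
  have c₃ : G.dist w u = G.dist u w := dist_comm
  omega

lemma MutuallyMaximallyDistant.eq_or_eq_of_stronglyResolves (hG : G.Connected) {u v w : α}
    (h : MutuallyMaximallyDistant G u v) (hw : StronglyResolves G w u v) : w = u ∨ w = v := by
  by_contra! hne
  rcases hw with hw | hw
  · exact h.2.dist_ne_add hG hne.2 hw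
  · exact h.1.dist_ne_add hG hne.1 hw

/-- Among the vertices `x` such that `u` lies on a `v`–`x` geodesic, one farthest from `v` is
maximally distant from `v`. -/
lemma SimpleGraph.Connected.exists_maximallyDistantFrom [Fintype α] (hG : G.Connected)
    (u v : α) : ∃ u', MaximallyDistantFrom G u' v ∧ G.dist v u' = G.dist v u + G.dist u u' := by
  classical
  obtain ⟨u', hu', hmax⟩ :=
    (univ.filter fun x => G.dist v x = G.dist v u + G.dist u x).exists_max_image
      (G.dist v) ⟨u, by simp⟩
  rw [mem_filter] at hu'
  refine ⟨u', fun w hadj => ?_, hu'.2⟩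
  by_contra! hw
  have h₁ : G.dist v w ≤ G.dist v u' + G.dist u' w := hG.dist_triangle
  have h₂ : G.dist u w ≤ G.dist u u' + G.dist u' w := hG.dist_triangle
  have h₃ : G.dist v w ≤ G.dist v u + G.dist u w := hG.dist_triangle
  have hu'w : G.dist u' w = 1 := dist_eq_one_iff_adj.2 hadj
  have c : G.dist u' v = G.dist v u' := dist_comm
  have := hmax w (mem_filter.2 ⟨mem_univ w, by omega⟩)
  omega

lemma SimpleGraph.Connected.exists_strongResolvingGraph_adj_stronglyResolves [Fintype α]
    (hG : G.Connected) {u v : α} (huv : u ≠ v) :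
    ∃ u' v', (strongResolvingGraph G).Adj u' v' ∧
      StronglyResolves G u' u v ∧ StronglyResolves G v' u v := by
  obtain ⟨u', hu'md, hu'⟩ := hG.exists_maximallyDistantFrom u v
  obtain ⟨v', hv'md, hv'⟩ := hG.exists_maximallyDistantFrom v u'
  have hpos : 0 < G.dist u v := hG.pos_dist_of_ne huv
  have h₁ : G.dist u' v' ≤ G.dist u' u + G.dist u v' := hG.dist_triangle
  have h₂ : G.dist u v' ≤ G.dist u v + G.dist v v' := hG.dist_triangle
  have c₁ : G.dist u' v = G.dist v u' := dist_comm
  have c₂ : G.dist u' u = G.dist u u' := dist_comm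
  have c₃ : G.dist v u = G.dist u v := dist_comm
  have c₄ : G.dist v' v = G.dist v v' := dist_comm
  have c₅ : G.dist v' u = G.dist u v' := dist_comm
  have hu'md' : MaximallyDistantFrom G u' v' := fun w hadj => by
    have := hu'md w hadj
    have : G.dist v' w ≤ G.dist v' v + G.dist v w := hG.dist_triangle
    omega
  refine ⟨u', v', ⟨fun e => ?_, hu'md', hv'md⟩, Or.inr (by omega), Or.inl (by omega)⟩
  subst e
  rw [dist_self] at hv'
  omega

theorem isStrongMetricGenerator_iff [Fintype α] (hG : G.Connected) {s : Finset α} :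
    IsStrongMetricGenerator G s ↔ ∀ u v, (strongResolvingGraph G).Adj u v → u ∈ s ∨ v ∈ s := by
  refine ⟨fun hs u v ⟨huv, h⟩ => ?_, fun hs u v huv => ?_⟩
  · obtain ⟨w, hw, hres⟩ := hs u v huv
    rcases h.eq_or_eq_of_stronglyResolves hG hres with rfl | rfl
    · exact Or.inl hw
    · exact Or.inr hw
  · obtain ⟨u', v', hadj, hu', hv'⟩ := hG.exists_strongResolvingGraph_adj_stronglyResolves huv
    rcases hs u' v' hadj with h | h
    · exact ⟨u', h, hu'⟩
    · exact ⟨v', h, hv'⟩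

end StrongResolving

lemma Finset.card_mul_add_card_le_of_forall_mem_or_mem [Fintype α] [Fintype β] [DecidableEq α]
    [DecidableEq β] {s : Finset (α × β)} (hs : ∀ x x' y, x ≠ x' → (x, y) ∈ s ∨ (x', y) ∈ s) :
    Fintype.card α * Fintype.card β + (univ.filter fun y => ∀ x, (x, y) ∈ s).card ≤
      s.card + Fintype.card β := by
  have hinj : sᶜ.card ≤ (univ.filter fun y => ¬ ∀ x, (x, y) ∈ s).card := by
    refine card_le_card_of_injOn Prod.snd (fun p hp => ?_) fun ⟨x, y⟩ hp ⟨x', y'⟩ hp' he => ?_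
    · simp only [coe_compl, Set.mem_compl_iff, mem_coe] at hp
      simpa using ⟨p.1, hp⟩
    · simp only [coe_compl, Set.mem_compl_iff, mem_coe] at hp hp'
      obtain rfl : y = y' := he
      by_contra hne
      have hx : x ≠ x' := fun h => hne (by rw [h])
      exact (hs x x' y hx).elim hp hp'
  have := card_filter_add_card_filter_not (s := (univ : Finset β)) (fun y => ∀ x, (x, y) ∈ s)
  have := card_le_univ s
  rw [card_compl, Fintype.card_prod] at hinj
  rw [Fintype.card_prod] at this
  rw [card_univ] at *
  omega

section CompleteStrongProduct

variable {H : SimpleGraph β}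

lemma maximallyDistantFrom_strongProd_top (hH : H.Connected) {x x' : α} {b d : β}
    (hne : (x, b) ≠ (x', d)) (hbd : b = d ∨ MaximallyDistantFrom H b d) :
    MaximallyDistantFrom (strongProd ⊤ H) (x, b) (x', d) := by
  classical
  have : Nonempty α := ⟨x⟩
  rintro ⟨z, w⟩ ⟨-, -, hw⟩
  have hdw : H.dist d w ≤ max 1 (H.dist b d) := by
    rcases hw with rfl | hw
    · exact dist_comm.trans_le (le_max_right _ _)
    rcases hbd with rfl | hbd
    · exact (dist_eq_one_iff_adj.2 hw).trans_le (le_max_left _ _)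
    · exact (hbd w hw).trans (le_max_right _ _)
  have hpos : 0 < (strongProd ⊤ H).dist (x, b) (x', d) :=
    (connected_strongProd connected_top hH).pos_dist_of_ne hne
  rw [dist_strongProd_top hH] at hpos ⊢
  rw [dist_strongProd_top hH]
  simp only at hpos hdw ⊢
  split_ifs at * <;> omega

lemma strongResolvingGraph_strongProd_top_adj (hH : H.Connected) {x x' : α} {b d : β}
    (hne : (x, b) ≠ (x', d)) (hbd : b = d ∨ MutuallyMaximallyDistant H b d) :
    (strongResolvingGraph (strongProd ⊤ H)).Adj (x, b) (x', d) :=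
  ⟨hne, maximallyDistantFrom_strongProd_top hH hne (hbd.imp_right And.left),
    maximallyDistantFrom_strongProd_top hH hne.symm (hbd.imp Eq.symm And.right)⟩

lemma stronglyResolves_strongProd_top (hH : H.Connected) {a c : α} {b d w : β} (hbd : b ≠ d)
    (h : H.dist w b = H.dist w d + H.dist d b) :
    StronglyResolves (strongProd ⊤ H) (c, w) (a, b) (c, d) := by
  classical
  have hpos : 0 < H.dist d b := hH.pos_dist_of_ne hbd.symm
  left
  rw [dist_strongProd_top hH, dist_strongProd_top hH, dist_strongProd_top hH]
  simp only [if_true]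
  split_ifs <;> omega

lemma IsStrongMetricGenerator.strongProd_top [Fintype α] [Fintype β] [DecidableEq α]
    [DecidableEq β]
    (hH : H.Connected) {s : Finset β} (hs : IsStrongMetricGenerator H s) (a₀ : α) :
    IsStrongMetricGenerator (strongProd ⊤ H) ({a₀} ×ˢ sᶜ)ᶜ := by
  have hmem : ∀ {x y}, (x, y) ∈ ({a₀} ×ˢ sᶜ)ᶜ ↔ (x = a₀ → y ∈ s) := by
    simp only [mem_compl, mem_product, mem_singleton, not_and, not_not, implies_true]
  rintro ⟨a, b⟩ ⟨c, d⟩ hne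
  by_cases hbd : b = d
  · subst hbd
    by_cases ha : a = a₀
    · refine ⟨(c, b), hmem.2 fun hc => (hne ?_).elim, stronglyResolves_right _ _⟩
      rw [ha, hc]
    · exact ⟨(a, b), hmem.2 fun h => (ha h).elim, stronglyResolves_left _ _⟩
  · obtain ⟨w, hw, h | h⟩ := hs b d hbd
    · exact ⟨(c, w), hmem.2 fun _ => hw, stronglyResolves_strongProd_top hH hbd h⟩
    · exact ⟨(a, w), hmem.2 fun _ => hw,
        stronglyResolves_comm.1 (stronglyResolves_strongProd_top hH (Ne.symm hbd) h)⟩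

lemma sdim_strongProd_top_le [Fintype α] [Fintype β] [Nonempty α] (hH : H.Connected) :
    sdim (strongProd (⊤ : SimpleGraph α) H) ≤ Fintype.card β * (Fintype.card α - 1) + sdim H := by
  classical
  obtain ⟨s, hs, hcard⟩ := exists_isStrongMetricGenerator_card_eq_sdim (G := H)
  refine (sdim_le_card (hs.strongProd_top hH (Classical.arbitrary α))).trans_eq ?_
  rw [card_compl, card_product, card_singleton, card_compl, one_mul, Fintype.card_prod, hcard,
    Nat.mul_sub_one, mul_comm]
  have : sdim H ≤ Fintype.card β := hcard ▸ card_le_univ s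
  have : Fintype.card β ≤ Fintype.card β * Fintype.card α :=
    Nat.le_mul_of_pos_right _ Fintype.card_pos
  omega

lemma le_card_of_isStrongMetricGenerator_strongProd_top [Fintype α] [Fintype β] [Nonempty α]
    (hH : H.Connected) {S : Finset (α × β)} (hS : IsStrongMetricGenerator (strongProd ⊤ H) S) :
    Fintype.card β * (Fintype.card α - 1) + sdim H ≤ S.card := by
  classical
  have hcover := (isStrongMetricGenerator_iff (connected_strongProd connected_top hH)).1 hS
  have hfibre : ∀ x x' y, x ≠ x' → (x, y) ∈ S ∨ (x', y) ∈ S := fun x x' y hx =>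
    hcover _ _ (strongResolvingGraph_strongProd_top_adj hH (by simp [hx]) (Or.inl rfl))
  have hT : IsStrongMetricGenerator H (univ.filter fun y => ∀ x, (x, y) ∈ S) := by
    refine (isStrongMetricGenerator_iff hH).2 fun b d ⟨hbd, hmmd⟩ => ?_
    by_contra! h
    simp only [mem_filter, mem_univ, true_and, not_forall] at h
    obtain ⟨⟨x, hx⟩, ⟨x', hx'⟩⟩ := h
    exact (hcover _ _ (strongResolvingGraph_strongProd_top_adj hH (by simp [hbd])
      (Or.inr hmmd))).elim hx hx'
  have := sdim_le_card hT
  have := card_mul_add_card_le_of_forall_mem_or_mem hfibre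
  rw [Nat.mul_sub_one, mul_comm]
  have : Fintype.card β ≤ Fintype.card α * Fintype.card β :=
    Nat.le_mul_of_pos_left _ Fintype.card_pos
  omega

theorem sdim_strongProd_top [Fintype α] [Fintype β] [Nonempty α] (hH : H.Connected) :
    sdim (strongProd (⊤ : SimpleGraph α) H) = Fintype.card β * (Fintype.card α - 1) + sdim H := by
  obtain ⟨S, hS, hcard⟩ :=
    exists_isStrongMetricGenerator_card_eq_sdim (G := strongProd (⊤ : SimpleGraph α) H)
  exact (sdim_strongProd_top_le hH).antisymm
    (hcard ▸ le_card_of_isStrongMetricGenerator_strongProd_top hH hS)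

end CompleteStrongProduct

theorem sdim_strongProd_complete_general [Fintype β] (n₁ : ℕ) (hn : 2 ≤ n₁)
    (H : SimpleGraph β) (hH : H.Connected) :
    sdim (strongProd (⊤ : SimpleGraph (Fin n₁)) H) =
      Fintype.card β * (n₁ - 1) + n₁ * sdim H - (n₁ - 1) * sdim H := by
  have : Nonempty (Fin n₁) := ⟨⟨0, by omega⟩⟩
  rw [sdim_strongProd_top hH, Fintype.card_fin, Nat.sub_one_mul]
  have := Nat.le_mul_of_pos_left (sdim H) (by omega : 0 < n₁)
  omega

theorem sdim_strongProd_complete [Fintype β] (n₁ : ℕ) (hn : 2 ≤ n₁)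
    (H : SimpleGraph β) (hH : H.Connected) (hHn : Nontrivial β) :
    sdim (strongProd (⊤ : SimpleGraph (Fin n₁)) H) =
      Fintype.card β * (n₁ - 1) + n₁ * sdim H - (n₁ - 1) * sdim H :=
  sdim_strongProd_complete_general n₁ hn H hH
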